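/- Suppose D has two orthonormal eigenvectors u^a, u^b with distinct eigenvalues λ_a ≠ λ_b such that u^a·q⁰ ≠ 0 and u^b·q⁰ ≠ 0. Then for every pair of real numbers (S*, C*) there exists an intervention σ ∈ ℝⁿ such that Ṡ = S*, Ċ = C*, and Ṗ = 2(S* − C*); in particular, every surplus outcome (Ċ, Ṗ, Ṡ) satisfying (1/2)Ṗ + Ċ = Ṡ can be implemented by an intervention. -/

import Mathlib

noncomputable section
open Matrix MeasureTheory Filter

/-- Vectors in `ℝⁿ` with the Euclidean norm/inner product. -/
abbrev Vec (n : ℕ) := EuclideanSpace ℝ (Fin n)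

variable {n : ℕ}

/-- Price effect `ṗ = −(I − D)⁻¹ σ`. -/
def pDot (D : Matrix (Fin n) (Fin n) ℝ) (σ : Vec n) : Vec n :=
  -(Matrix.toEuclideanLin (1 - D)⁻¹ σ)

/-- Quantity effect `q̇ = D ṗ`. -/
def qDot (D : Matrix (Fin n) (Fin n) ℝ) (σ : Vec n) : Vec n :=
  Matrix.toEuclideanLin D (pDot D σ)

/-- Expenditure derivative `Ṡ = σ·q⁰`. -/
def SDot (q σ : Vec n) : ℝ := inner ℝ σ q

/-- Consumer surplus derivative `Ċ = −q⁰·ṗ`. -/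
def CDot (D : Matrix (Fin n) (Fin n) ℝ) (q σ : Vec n) : ℝ := -(inner ℝ q (pDot D σ) : ℝ)

/-- Producer surplus derivative `Ṗ = 2 q⁰·q̇`. -/
def PDot (D : Matrix (Fin n) (Fin n) ℝ) (q σ : Vec n) : ℝ := 2 * (inner ℝ q (qDot D σ) : ℝ)

/-- Total surplus derivative `Ẇ = Ċ + Ṗ − Ṡ`. -/
def WDot (D : Matrix (Fin n) (Fin n) ℝ) (q σ : Vec n) : ℝ :=
  CDot D q σ + PDot D q σ - SDot q σ

/-- A normalized Slutsky matrix: symmetric, negative semidefinite, diagonal entries `−1`. -/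
def IsSlutsky (D : Matrix (Fin n) (Fin n) ℝ) : Prop :=
  D.IsSymm ∧ (-D).PosSemidef ∧ ∀ i, D i i = -1

/-- The span of the eigenvectors of a matrix whose eigenvalues are at least `M`
in absolute value. -/
def eigSpan (A : Matrix (Fin n) (Fin n) ℝ) (M : ℝ) : Submodule ℝ (Vec n) :=
  ⨆ μ ∈ {μ : ℝ | M ≤ |μ|}, Module.End.eigenspace (Matrix.toEuclideanLin A) μ

/-- Orthogonal projection onto a subspace, as a map into the ambient space. -/
def projVec (V : Submodule ℝ (Vec n)) (x : Vec n) : Vec n :=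
  (V.orthogonalProjectionOnto x : Vec n)

/-- Orthogonal projection onto a subspace, as a continuous linear endomorphism. -/
def projCLM (V : Submodule ℝ (Vec n)) : Vec n →L[ℝ] Vec n :=
  V.subtypeL.comp V.orthogonalProjectionOnto

/-- Spectral (operator) norm of a matrix. -/
def specNorm (A : Matrix (Fin n) (Fin n) ℝ) : ℝ :=
  ‖LinearMap.toContinuousLinearMap (Matrix.toEuclideanLin A)‖

/-
The budget identity `Ṗ = 2 (Ṡ − Ċ)` holds for every intervention: `(I − D) ṗ = −σ` gives
`q̇ = D ṗ = ṗ + σ`. It therefore suffices to hit any prescribed pair `(Ṡ, Ċ)`. On an eigenvector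
`u` of `D` with eigenvalue `λ`, the intervention `σ = u` yields `(Ṡ, Ċ) = (u·q⁰, (1 − λ)⁻¹ u·q⁰)`;
for two eigenvectors not orthogonal to `q⁰` with distinct eigenvalues these two vectors are
linearly independent in `ℝ²`, so their span is everything.
-/

theorem Matrix.toEuclideanLin_nonsing_inv_apply_of_eq_smul {𝕜 ι : Type*} [RCLike 𝕜] [Fintype ι]
    [DecidableEq ι] {A : Matrix ι ι 𝕜} (hA : IsUnit A.det) {u : EuclideanSpace 𝕜 ι} {μ : 𝕜}
    (hu : toEuclideanLin A u = μ • u) : toEuclideanLin A⁻¹ u = μ⁻¹ • u := by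
  have hcancel : μ • toEuclideanLin A⁻¹ u = u := by
    rw [← map_smul, ← hu, ← LinearMap.comp_apply, ← toLpLin_mul_same,
      nonsing_inv_mul A hA, toLpLin_one, LinearMap.id_apply]
  rcases eq_or_ne μ 0 with rfl | hμ
  · rw [zero_smul] at hcancel
    simp [← hcancel]
  · rw [← hcancel, smul_smul, inv_mul_cancel₀ hμ, one_smul, hcancel]

theorem Matrix.toEuclideanLin_one_sub_inv_apply_of_eq_smul {𝕜 ι : Type*} [RCLike 𝕜]
    [Fintype ι] [DecidableEq ι] {D : Matrix ι ι 𝕜} (hD : IsUnit (1 - D).det)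
    {u : EuclideanSpace 𝕜 ι} {μ : 𝕜} (hu : toEuclideanLin D u = μ • u) :
    toEuclideanLin (1 - D)⁻¹ u = (1 - μ)⁻¹ • u :=
  toEuclideanLin_nonsing_inv_apply_of_eq_smul hD <| by
    rw [map_sub, LinearMap.sub_apply, toLpLin_one, LinearMap.id_apply, hu, sub_smul, one_smul]

theorem Matrix.posDef_one_sub_of_posSemidef_neg {ι : Type*} [Fintype ι] [DecidableEq ι]
    {D : Matrix ι ι ℝ} (hD : (-D).PosSemidef) : (1 - D).PosDef := by
  simpa [sub_eq_add_neg] using PosDef.one.add_posSemidef hD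

section Effects

variable {D : Matrix (Fin n) (Fin n) ℝ}

theorem qDot_eq_pDot_add (hD : IsUnit (1 - D).det) (σ : Vec n) :
    qDot D σ = pDot D σ + σ := by
  have hsplit : toEuclideanLin D = toEuclideanLin 1 - toEuclideanLin (1 - D) := by
    rw [← map_sub, sub_sub_cancel]
  rw [qDot, hsplit, LinearMap.sub_apply, toLpLin_one, LinearMap.id_apply, pDot, map_neg,
    ← LinearMap.comp_apply, ← toLpLin_mul_same, mul_nonsing_inv _ hD, toLpLin_one,
    LinearMap.id_apply]
  abel

theorem PDot_eq_two_mul_SDot_sub_CDot (hD : IsUnit (1 - D).det) (q σ : Vec n) :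
    PDot D q σ = 2 * (SDot q σ - CDot D q σ) := by
  rw [PDot, qDot_eq_pDot_add hD, inner_add_right, SDot, CDot, real_inner_comm σ]
  ring

theorem CDot_eq_inner_nonsing_inv (q σ : Vec n) :
    CDot D q σ = inner ℝ q (toEuclideanLin (1 - D)⁻¹ σ) := by
  rw [CDot, pDot, inner_neg_right, neg_neg]

end Effects

theorem exists_add_eq_and_weighted_add_eq {a b α β : ℝ} (ha : a ≠ 0) (hb : b ≠ 0) (hαβ : α ≠ β)
    (S C : ℝ) : ∃ s t : ℝ, s * a + t * b = S ∧ α * (s * a) + β * (t * b) = C := by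
  have hαβ' : α - β ≠ 0 := sub_ne_zero.mpr hαβ
  refine ⟨(C - β * S) / ((α - β) * a), (α * S - C) / ((α - β) * b), ?_, ?_⟩ <;>
    field_simp <;> ring

theorem stmt18_general (n : ℕ) (D : Matrix (Fin n) (Fin n) ℝ) (hD : IsSlutsky D)
    (q : Vec n)
    (ua ub : Vec n) (lama lamb : ℝ)
    (heiga : Matrix.toEuclideanLin D ua = lama • ua)
    (heigb : Matrix.toEuclideanLin D ub = lamb • ub)
    (hne : lama ≠ lamb)
    (hqa : (inner ℝ ua q : ℝ) ≠ 0) (hqb : (inner ℝ ub q : ℝ) ≠ 0) :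
    ∀ Sstar Cstar : ℝ, ∃ σ : Vec n,
      SDot q σ = Sstar ∧ CDot D q σ = Cstar ∧ PDot D q σ = 2 * (Sstar - Cstar) := by
  intro Sstar Cstar
  have hdet : IsUnit (1 - D).det :=
    (isUnit_iff_isUnit_det _).mp (posDef_one_sub_of_posSemidef_neg hD.2.1).isUnit
  have hinv_ne : (1 - lama)⁻¹ ≠ (1 - lamb)⁻¹ := by
    rwa [Ne, _root_.inv_inj, sub_right_inj]
  obtain ⟨s, t, hS, hC⟩ := exists_add_eq_and_weighted_add_eq hqa hqb hinv_ne Sstar Cstar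
  have hSDot : SDot q (s • ua + t • ub) = Sstar := by
    rw [SDot, inner_add_left, real_inner_smul_left, real_inner_smul_left, hS]
  have hCDot : CDot D q (s • ua + t • ub) = Cstar := by
    rw [CDot_eq_inner_nonsing_inv, map_add, map_smul, map_smul,
      toEuclideanLin_one_sub_inv_apply_of_eq_smul hdet heiga,
      toEuclideanLin_one_sub_inv_apply_of_eq_smul hdet heigb, inner_add_right,
      real_inner_smul_right, real_inner_smul_right, real_inner_smul_right, real_inner_smul_right,
      real_inner_comm ua q, real_inner_comm ub q, ← hC]
    ring
  exact ⟨s • ua + t • ub, hSDot, hCDot,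
    by rw [PDot_eq_two_mul_SDot_sub_CDot hdet, hSDot, hCDot]⟩

/-- if D has two orthonormal eigenvectors with distinct eigenvalues,
both non-orthogonal to q0, then every surplus outcome with (1/2)Pdot + Cdot = Sdot is
implementable by some intervention. -/
theorem stmt18 (n : ℕ) (hn : 1 ≤ n) (D : Matrix (Fin n) (Fin n) ℝ) (hD : IsSlutsky D)
    (q : Vec n) (hq : ‖q‖ ≤ 1)
    (ua ub : Vec n) (lama lamb : ℝ)
    (hua : ‖ua‖ = 1) (hub : ‖ub‖ = 1) (hab : (inner ℝ ua ub : ℝ) = 0)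
    (heiga : Matrix.toEuclideanLin D ua = lama • ua)
    (heigb : Matrix.toEuclideanLin D ub = lamb • ub)
    (hne : lama ≠ lamb)
    (hqa : (inner ℝ ua q : ℝ) ≠ 0) (hqb : (inner ℝ ub q : ℝ) ≠ 0) :
    ∀ Sstar Cstar : ℝ, ∃ σ : Vec n,
      SDot q σ = Sstar ∧ CDot D q σ = Cstar ∧ PDot D q σ = 2 * (Sstar - Cstar) :=
  stmt18_general n D hD q ua ub lama lamb heiga heigb hne hqa hqb
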